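/- Let $r,s\ge 0$ be integers, let $\lambda_1,\dots,\lambda_r\in(-1,0)\cup(0,1)$ be distinct, let $\gamma_1,\dots,\gamma_s\in(0,1)$ be distinct, and let $\varphi_1,\dots,\varphi_s\in(0,\pi)$. Suppose $c_1,\dots,c_r,c_{11},c_{12},\dots,c_{s1},c_{s2}$ are real numbers such that for every positive integer $m$, $\sum_{i=1}^r c_i\lambda_i^m+\sum_{k=1}^s\big[c_{k1}\gamma_k^m\cos(m\varphi_k)+c_{k2}\gamma_k^m\sin(m\varphi_k)\big]=0$. Then all coefficients $c_i$, $c_{k1}$, $c_{k2}$ are zero. -/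

import Mathlib

/-!
Writing `z_k = γ_k e^{iφ_k}`, each damped sinusoid is `Re ((c_{k1} - i c_{k2}) z_kᵐ)`, so the
relation is a vanishing power sum `∑ a_j v_jᵐ` over the nodes `λ_i`, `z_k`, `conj z_k`. These are
nonzero and pairwise distinct (imaginary parts zero, positive, negative; distinct moduli `γ_k`),
so the Vandermonde determinant forces every coefficient to vanish.
-/

open Complex ComplexConjugate

theorem eq_zero_of_forall_sum_mul_pow_eq_zero {R ι : Type*} [CommRing R] [IsDomain R]
    [Fintype ι] {v a : ι → R} (hv : Function.Injective v) (hv0 : ∀ j, v j ≠ 0)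
    (h : ∀ m : ℕ, 1 ≤ m → ∑ j, a j * v j ^ m = 0) : a = 0 := by
  let e := Fintype.equivFin ι
  -- Vandermonde applied to the coefficients `a j * v j`, which absorb one power of `v j`.
  have hav : (fun i => a (e.symm i) * v (e.symm i)) = 0 := by
    refine Matrix.eq_zero_of_forall_pow_sum_mul_pow_eq_zero (hv.comp e.symm.injective) fun i => ?_
    rw [← h (i + 1) i.val.succ_pos, ← e.symm.sum_comp]
    simp only [Function.comp_apply, pow_succ, mul_assoc, mul_comm (v _)]
  funext j
  simpa [hv0 j] using congrFun hav (e j)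

theorem eq_zero_of_forall_sum_pow_add_sum_re_mul_pow_eq_zero {ι κ : Type*} [Fintype ι]
    [Fintype κ] {x : κ → ℝ} (hx : Function.Injective x) (hx0 : ∀ i, x i ≠ 0)
    {w : ι → ℂ} (hw : Function.Injective w) (hw_im : ∀ k, 0 < (w k).im)
    {c : κ → ℝ} {b : ι → ℂ}
    (h : ∀ m : ℕ, 1 ≤ m → ∑ i, c i * x i ^ m + ∑ k, (b k * w k ^ m).re = 0) :
    c = 0 ∧ b = 0 := by
  let v : κ ⊕ (ι ⊕ ι) → ℂ := Sum.elim (fun i => x i) (Sum.elim w (conj ∘ w))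
  let a : κ ⊕ (ι ⊕ ι) → ℂ :=
    Sum.elim (fun i => c i) (Sum.elim (fun k => b k / 2) (fun k => conj (b k) / 2))
  have hv : Function.Injective v := by
    refine (ofReal_injective.comp hx).sumElim
      (hw.sumElim ((RingHom.injective _).comp hw) fun k k' hkk' => ?_) ?_
    · have := congrArg im hkk'
      simp only [Function.comp_apply, conj_im] at this
      linarith [hw_im k, hw_im k']
    · rintro i (k | k) hik <;> have := congrArg im hik <;>
        simp only [Function.comp_apply, ofReal_im, conj_im, Sum.elim_inl, Sum.elim_inr] at this <;>
        linarith [hw_im k]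
  have hv0 : ∀ j, v j ≠ 0 := by
    rintro (i | k | k) <;> simp only [v, Sum.elim_inl, Sum.elim_inr, Function.comp_apply,
      ne_eq, ofReal_eq_zero, map_eq_zero]
    · exact hx0 i
    all_goals exact fun hk => (hw_im k).ne' (by simp [hk])
  have ha := eq_zero_of_forall_sum_mul_pow_eq_zero (a := a) hv hv0 fun m hm => by
    have hpair : ∀ k, b k / 2 * w k ^ m + conj (b k) / 2 * conj (w k) ^ m
        = ((b k * w k ^ m).re : ℂ) := fun k => by
      rw [re_eq_add_conj, map_mul, map_pow]; ring
    simp only [Fintype.sum_sum_type, v, a, Sum.elim_inl, Sum.elim_inr,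
      Function.comp_apply, ← Finset.sum_add_distrib, hpair]
    exact_mod_cast h m hm
  refine ⟨funext fun i => ?_, funext fun k => ?_⟩
  · simpa [a] using congrFun ha (.inl i)
  · simpa [a] using congrFun ha (.inr (.inl k))

theorem re_mul_polar_pow (p q g φ : ℝ) (m : ℕ) :
    ((p - q * I) * (g * exp (φ * I)) ^ m).re
      = p * g ^ m * Real.cos (m * φ) + q * g ^ m * Real.sin (m * φ) := by
  have hangle : (m : ℂ) * (φ * I) = ((m * φ : ℝ) : ℂ) * I := by push_cast; ring
  rw [mul_pow, ← exp_nat_mul, hangle, exp_mul_I, ← ofReal_cos, ← ofReal_sin, ← ofReal_pow]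
  simp only [mul_re, mul_im, sub_re, sub_im, ofReal_re, ofReal_im, add_re, add_im, I_re, I_im]
  ring

theorem stmt4 (r s : ℕ)
    (lam : Fin r → ℝ) (hlam : ∀ i, lam i ∈ Set.Ioo (-1 : ℝ) 0 ∪ Set.Ioo (0 : ℝ) 1)
    (hlamd : Function.Injective lam)
    (gam : Fin s → ℝ) (hgam : ∀ j, gam j ∈ Set.Ioo (0 : ℝ) 1)
    (hgamd : Function.Injective gam)
    (phi : Fin s → ℝ) (hphi : ∀ j, phi j ∈ Set.Ioo (0 : ℝ) Real.pi)
    (c : Fin r → ℝ) (c1 c2 : Fin s → ℝ)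
    (h : ∀ m : ℕ, 1 ≤ m →
      (∑ i, c i * lam i ^ m) +
        (∑ k, (c1 k * gam k ^ m * Real.cos (m * phi k) +
               c2 k * gam k ^ m * Real.sin (m * phi k))) = 0) :
    (∀ i, c i = 0) ∧ (∀ k, c1 k = 0) ∧ (∀ k, c2 k = 0) := by
  set w : Fin s → ℂ := fun k => gam k * exp (phi k * I)
  have hw_norm : ∀ k, ‖w k‖ = gam k := fun k => by
    simp [w, norm_exp_ofReal_mul_I, abs_of_pos (hgam k).1]
  have hw_im : ∀ k, 0 < (w k).im := fun k => by
    simpa [w, exp_ofReal_mul_I_im] using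
      mul_pos (hgam k).1 (Real.sin_pos_of_pos_of_lt_pi (hphi k).1 (hphi k).2)
  have hw : Function.Injective w := fun k k' hkk' =>
    hgamd <| by rw [← hw_norm k, ← hw_norm k', hkk']
  have hlam0 : ∀ i, lam i ≠ 0 := fun i => by
    rcases hlam i with hi | hi
    exacts [hi.2.ne, hi.1.ne']
  obtain ⟨hc, hb⟩ := eq_zero_of_forall_sum_pow_add_sum_re_mul_pow_eq_zero hlamd hlam0 hw hw_im
    (b := fun k => c1 k - c2 k * I) fun m hm => by
      simpa only [w, re_mul_polar_pow] using h m hm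
  have hb' : ∀ k, c1 k - c2 k * I = 0 := congrFun hb
  refine ⟨congrFun hc, fun k => ?_, fun k => ?_⟩
  · simpa using congrArg re (hb' k)
  · simpa using congrArg im (hb' k)
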